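/- arXiv:2206.01515 — 3 statements merged into one kernel-verified Lean document; each statement's English description precedes it below -/
import Mathlib

section
/- Let D be a probability measure on α × Fin k, Q a probability measure on Θ, and g : Θ × α → Fin k a measurable classifier. Define the conditional risk r(x,y) = ∫_Θ 1[g(θ,x) ≠ y] dQ(θ). Then AV(Q) ≤ 2·R_D(Q) − ∫_{α×Fin k} r(x,y)² dD(x,y). (Refined intermediate inequality in the proof of Theorem 1, before applying Jensen's inequality.) -/
open MeasureTheory

/-!
If two predictions `a, b` disagree, then at least one of them differs from the label `y`, so
`1[a ≠ b] ≤ 1 - (1 - e a) (1 - e b) = e a + e b - e a e b` with `e = 1[· ≠ y]`.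
Integrating `a = g(θ, x)`, `b = g(θ', x)` against `Q ⊗ Q` turns the right-hand side into
`2 r - r²`, with `r` the conditional risk at `(x, y)`; integrating over `D` finishes.
-/

lemma ite_ne_le_add_sub_mul {β : Type*} [DecidableEq β] (a b y : β) :
    (if a ≠ b then (1 : ℝ) else 0) ≤
      (if a ≠ y then 1 else 0) + (if b ≠ y then 1 else 0) -
        (if a ≠ y then 1 else 0) * (if b ≠ y then 1 else 0) := by
  split_ifs <;> simp_all

section

variable {Θ : Type*} [MeasurableSpace Θ] (μ : Measure Θ) [IsProbabilityMeasure μ]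

lemma integral_le_const_add_sub_const_mul {h f : Θ → ℝ} (hh : 0 ≤ h) (hf : Integrable f μ)
    {c : ℝ} (hle : ∀ θ, h θ ≤ c + f θ - c * f θ) :
    ∫ θ, h θ ∂μ ≤ c + ∫ θ, f θ ∂μ - c * ∫ θ, f θ ∂μ := by
  have hcf : Integrable (fun θ => c + f θ) μ := (integrable_const c).add hf
  have hg : Integrable (fun θ => c + f θ - c * f θ) μ := hcf.sub (hf.const_mul c)
  calc ∫ θ, h θ ∂μ ≤ ∫ θ, (c + f θ - c * f θ) ∂μ :=
        integral_mono_of_nonneg (ae_of_all _ hh) hg (ae_of_all _ hle)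
    _ = c + ∫ θ, f θ ∂μ - c * ∫ θ, f θ ∂μ := by
        rw [integral_sub hcf (hf.const_mul c),
          integral_add (integrable_const c) hf, integral_const, integral_const_mul]
        simp

variable {β : Type*} [MeasurableSpace β] [MeasurableSingletonClass β] [DecidableEq β]
  {u : Θ → β}

lemma integrable_ite_ne_const (hu : Measurable u) (y : β) :
    Integrable (fun θ => if u θ ≠ y then (1 : ℝ) else 0) μ :=
  .of_bound ((Measurable.ite (hu (measurableSet_singleton y)).compl measurable_const
    measurable_const).aestronglyMeasurable) 1 (ae_of_all _ fun θ => by split_ifs <;> simp)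

lemma integral_integral_ite_ne_le (hu : Measurable u) (y : β) :
    ∫ θ, ∫ θ', (if u θ ≠ u θ' then (1 : ℝ) else 0) ∂μ ∂μ ≤
      2 * (∫ θ, (if u θ ≠ y then (1 : ℝ) else 0) ∂μ) -
        (∫ θ, (if u θ ≠ y then (1 : ℝ) else 0) ∂μ) ^ 2 := by
  set e : β → ℝ := fun b => if b ≠ y then 1 else 0
  set r := ∫ θ, e (u θ) ∂μ
  have he : Integrable (fun θ => e (u θ)) μ := integrable_ite_ne_const μ hu y
  have hinner : ∀ θ, ∫ θ', (if u θ ≠ u θ' then (1 : ℝ) else 0) ∂μ ≤ e (u θ) + r - e (u θ) * r :=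
    fun θ => integral_le_const_add_sub_const_mul μ (fun _ => by positivity) he
      fun θ' => ite_ne_le_add_sub_mul _ _ y
  calc _ ≤ r + r - r * r :=
        integral_le_const_add_sub_const_mul μ (fun _ => by positivity) he
          fun θ => (hinner θ).trans_eq (by ring)
    _ = 2 * r - r ^ 2 := by ring

end

theorem algorithm_db_variability_le_two_risk_sub_integral_conditional_risk_sq_general
    {α Θ : Type*} [MeasurableSpace α] [MeasurableSpace Θ]
    {k : ℕ}
    (D : Measure (α × Fin k)) [IsProbabilityMeasure D]
    (Q : Measure Θ) [IsProbabilityMeasure Q]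
    (g : Θ × α → Fin k) (hg : Measurable g) :
    (∫ p, ∫ θ, ∫ θ',
        (if g (θ, p.1) ≠ g (θ', p.1) then (1 : ℝ) else 0) ∂Q ∂Q ∂D) ≤
      2 * (∫ p, ∫ θ, (if g (θ, p.1) ≠ p.2 then (1 : ℝ) else 0) ∂Q ∂D) -
        ∫ p, (∫ θ, (if g (θ, p.1) ≠ p.2 then (1 : ℝ) else 0) ∂Q) ^ 2 ∂D := by
  set r : α × Fin k → ℝ := fun p => ∫ θ, (if g (θ, p.1) ≠ p.2 then (1 : ℝ) else 0) ∂Q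
  have hr_meas : StronglyMeasurable r :=
    StronglyMeasurable.integral_prod_right'
      (f := fun q : (α × Fin k) × Θ => if g (q.2, q.1.1) ≠ q.1.2 then (1 : ℝ) else 0)
      (Measurable.ite (measurableSet_eq_fun (by fun_prop) (by fun_prop)).compl
        measurable_const measurable_const).stronglyMeasurable
  have hr_le : ∀ p, ‖r p‖ ≤ 1 := fun p =>
    (norm_integral_le_of_norm_le_const (C := 1)
      (ae_of_all _ fun θ => by split_ifs <;> simp)).trans_eq (by simp)
  have hr : Integrable r D := .of_bound hr_meas.aestronglyMeasurable 1 (ae_of_all _ hr_le)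
  have hr2 : Integrable (fun p => r p ^ 2) D :=
    .of_bound (hr_meas.pow 2).aestronglyMeasurable 1
      (ae_of_all _ fun p => (norm_pow (r p) 2).trans_le (pow_le_one₀ (norm_nonneg _) (hr_le p)))
  calc _ ≤ ∫ p, (2 * r p - r p ^ 2) ∂D :=
        integral_mono_of_nonneg (ae_of_all _ fun _ => by positivity) ((hr.const_mul 2).sub hr2)
          (ae_of_all _ fun p => integral_integral_ite_ne_le Q (by fun_prop) p.2)
    _ = _ := by rw [integral_sub (hr.const_mul 2) hr2, integral_const_mul]

/-- Refined intermediate inequality in the proof of Theorem 1: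
`AV(Q) ≤ 2·R_D(Q) − ∫ r(x,y)² dD(x,y)` where
`r(x,y) = ∫_Θ 1[g(θ,x) ≠ y] dQ(θ)` is the conditional risk. -/
theorem algorithm_db_variability_le_two_risk_sub_integral_conditional_risk_sq
    {α Θ : Type*} [MeasurableSpace α] [MeasurableSpace Θ]
    {k : ℕ} (hk : 2 ≤ k)
    (D : Measure (α × Fin k)) [IsProbabilityMeasure D]
    (Q : Measure Θ) [IsProbabilityMeasure Q]
    (g : Θ × α → Fin k) (hg : Measurable g) :
    (∫ p, ∫ θ, ∫ θ',
        (if g (θ, p.1) ≠ g (θ', p.1) then (1 : ℝ) else 0) ∂Q ∂Q ∂D) ≤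
      2 * (∫ p, ∫ θ, (if g (θ, p.1) ≠ p.2 then (1 : ℝ) else 0) ∂Q ∂D) -
        ∫ p, (∫ θ, (if g (θ, p.1) ≠ p.2 then (1 : ℝ) else 0) ∂Q) ^ 2 ∂D :=
  algorithm_db_variability_le_two_risk_sub_integral_conditional_risk_sq_general D Q g hg
end

section
/- Let D be a probability measure on α × Bool, Q a probability measure on Θ, and g : Θ × α → Bool a measurable classifier. Then 1 − AV(Q) ≥ R_D(Q)² + (1 − R_D(Q))². (Variance-decomposition inequality in the proof of Theorem 2: the expected agreement probability dominates R² + (1 − R)².) -/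
/-!
For fixed `(x, y)` let `r` be the `Q`-probability that `g (·, x)` misclassifies `(x, y)`. Since the
labels are binary, two independent draws `θ, θ'` disagree exactly when one of them is right and the
other wrong, which has probability `2 r (1 - r)`. Hence `1 - AV(Q) = 𝔼_D [r² + (1 - r)²]`, and this
dominates `(𝔼_D r)² + (1 - 𝔼_D r)²` because `𝔼 r² ≥ (𝔼 r)²` (nonnegativity of the variance).
-/

open MeasureTheory ProbabilityTheory

-- Affine in the second indicator, so integrating out `a'` only needs its mean.
lemma Bool.ite_ne_eq_add_mul (a a' b : Bool) :
    (if a ≠ a' then (1 : ℝ) else 0) =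
      (if a ≠ b then 1 else 0) +
        (1 - 2 * (if a ≠ b then 1 else 0)) * (if a' ≠ b then 1 else 0) := by
  cases a <;> cases a' <;> cases b <;> norm_num

lemma measurable_ite_ne_one_zero {β : Type*} [MeasurableSpace β] {u v : β → Bool}
    (hu : Measurable u) (hv : Measurable v) :
    Measurable fun x => if u x ≠ v x then (1 : ℝ) else 0 :=
  (Measurable.of_discrete (f := fun q : Bool × Bool => if q.1 ≠ q.2 then (1 : ℝ) else 0)).comp
    (hu.prodMk hv)

lemma norm_ite_one_zero_le (P : Prop) [Decidable P] : ‖(if P then (1 : ℝ) else 0)‖ ≤ 1 := by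
  split_ifs <;> simp

section

variable {Θ : Type*} [MeasurableSpace Θ] (Q : Measure Θ) [IsProbabilityMeasure Q]

lemma integrable_ite_ne_one_zero {h : Θ → Bool} (hh : Measurable h) (b : Bool) :
    Integrable (fun θ => if h θ ≠ b then (1 : ℝ) else 0) Q :=
  .of_bound (measurable_ite_ne_one_zero hh measurable_const).aestronglyMeasurable 1
    (ae_of_all _ fun _ => norm_ite_one_zero_le _)

lemma integral_integral_ite_ne_bool {h : Θ → Bool} (hh : Measurable h) (b : Bool) :
    ∫ θ, ∫ θ', (if h θ ≠ h θ' then (1 : ℝ) else 0) ∂Q ∂Q =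
      2 * (∫ θ, (if h θ ≠ b then (1 : ℝ) else 0) ∂Q) *
        (1 - ∫ θ, (if h θ ≠ b then (1 : ℝ) else 0) ∂Q) := by
  have he := integrable_ite_ne_one_zero Q hh b
  simp only [Bool.ite_ne_eq_add_mul (h _) (h _) b]
  simp_rw [integral_add (integrable_const _) (he.const_mul _), integral_const_mul, integral_const,
    probReal_univ, one_smul]
  rw [integral_add he (((integrable_const (1 : ℝ)).sub' (he.const_mul 2)).mul_const _),
    integral_mul_const, integral_sub (integrable_const 1) (he.const_mul 2), integral_const_mul]
  simp only [integral_const, probReal_univ, one_smul]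
  ring

end

lemma sq_integral_le_integral_sq {Ω : Type*} [MeasurableSpace Ω] {μ : Measure Ω}
    [IsProbabilityMeasure μ] {X : Ω → ℝ} (hX : MemLp X 2 μ) :
    (∫ ω, X ω ∂μ) ^ 2 ≤ ∫ ω, X ω ^ 2 ∂μ := by
  have := variance_nonneg X μ
  rw [variance_eq_sub hX] at this
  simpa only [Pi.pow_apply, sub_nonneg] using this

lemma sq_integral_add_sq_one_sub_integral_le {Ω : Type*} [MeasurableSpace Ω] {μ : Measure Ω}
    [IsProbabilityMeasure μ] {X : Ω → ℝ} (hX : MemLp X 2 μ) :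
    (∫ ω, X ω ∂μ) ^ 2 + (1 - ∫ ω, X ω ∂μ) ^ 2 ≤ 1 - ∫ ω, 2 * X ω * (1 - X ω) ∂μ := by
  have hX1 := hX.integrable one_le_two
  have hX2 := hX.integrable_sq
  have hexpand : ∫ ω, 2 * X ω * (1 - X ω) ∂μ = 2 * ∫ ω, X ω ∂μ - 2 * ∫ ω, X ω ^ 2 ∂μ := by
    simp_rw [show ∀ ω, 2 * X ω * (1 - X ω) = 2 * X ω - 2 * X ω ^ 2 from fun ω => by ring]
    rw [integral_sub (hX1.const_mul 2) (hX2.const_mul 2), integral_const_mul, integral_const_mul]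
  rw [hexpand]
  nlinarith [sq_integral_le_integral_sq hX]

/-- Variance-decomposition inequality in the proof of Theorem 2:
`1 − AV(Q) ≥ R_D(Q)² + (1 − R_D(Q))²`. -/
theorem one_sub_algorithm_db_variability_ge_binary
    {α Θ : Type*} [MeasurableSpace α] [MeasurableSpace Θ]
    (D : Measure (α × Bool)) [IsProbabilityMeasure D]
    (Q : Measure Θ) [IsProbabilityMeasure Q]
    (g : Θ × α → Bool) (hg : Measurable g) :
    1 - (∫ p, ∫ θ, ∫ θ',
          (if g (θ, p.1) ≠ g (θ', p.1) then (1 : ℝ) else 0) ∂Q ∂Q ∂D) ≥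
      (∫ p, ∫ θ, (if g (θ, p.1) ≠ p.2 then (1 : ℝ) else 0) ∂Q ∂D) ^ 2 +
        (1 - ∫ p, ∫ θ, (if g (θ, p.1) ≠ p.2 then (1 : ℝ) else 0) ∂Q ∂D) ^ 2 := by
  set gibbsError : α × Bool → ℝ := fun p => ∫ θ, (if g (θ, p.1) ≠ p.2 then (1 : ℝ) else 0) ∂Q
  have hvariability : ∀ p : α × Bool,
      ∫ θ, ∫ θ', (if g (θ, p.1) ≠ g (θ', p.1) then (1 : ℝ) else 0) ∂Q ∂Q =
        2 * gibbsError p * (1 - gibbsError p) := fun p =>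
    integral_integral_ite_ne_bool Q (hg.comp (measurable_id.prodMk measurable_const)) p.2
  have hmeas : StronglyMeasurable gibbsError :=
    (measurable_ite_ne_one_zero (hg.comp (measurable_snd.prodMk measurable_fst.fst))
      measurable_fst.snd).stronglyMeasurable.integral_prod_right'
  have hbound : ∀ p, gibbsError p ∈ Set.Icc (-1) 1 := fun p => by
    have := norm_integral_le_of_norm_le_const (μ := Q)
      (ae_of_all _ fun θ => norm_ite_one_zero_le (g (θ, p.1) ≠ p.2))
    rwa [probReal_univ, mul_one, Real.norm_eq_abs, abs_le] at this
  simp_rw [hvariability]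
  exact sq_integral_add_sq_one_sub_integral_le
    (memLp_of_bounded (ae_of_all _ hbound) hmeas.aestronglyMeasurable 2)
end

section
/- Let D be a probability measure on α × Fin k, let Q and Q' be probability measures on Θ, and let g : Θ × α → Fin k be a measurable classifier. Then |R_D(Q) − R_D(Q')| ≤ Dis_D(Q,Q'); that is, the difference of the Gibbs risks of the two posteriors is bounded by their expected decision-boundary disagreement. (Lemma 3.) -/
/-!
Write `h θ = 1[g(θ, x) ≠ y]`. Since `Q'` and `Q` are probability measures,
`∫ h dQ - ∫ h dQ' = ∫∫ (h θ - h θ') dQ' dQ`, and `|h θ - h θ'| ≤ 1[g(θ, x) ≠ g(θ', x)]`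
because two predictions that agree are either both right or both wrong. Integrating this
pointwise bound over `Q ⊗ Q'` and then over `D` gives the claim.
-/

open MeasureTheory

section

variable {X : Type*} [MeasurableSpace X]

lemma integrable_ite_one_zero (μ : Measure X) [IsFiniteMeasure μ] {P : X → Prop}
    [DecidablePred P] (hP : MeasurableSet {x | P x}) :
    Integrable (fun x => if P x then (1 : ℝ) else 0) μ := by
  refine ((integrable_const (1 : ℝ)).indicator hP).congr (ae_of_all _ fun x => ?_)
  simp [Set.indicator_apply]

lemma abs_integral_sub_integral_le {μ ν : Measure X} [IsProbabilityMeasure μ]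
    [IsProbabilityMeasure ν] {f : X → ℝ} {c : X → X → ℝ} (hfμ : Integrable f μ)
    (hfν : Integrable f ν) (hc : ∀ a, Integrable (c a) ν)
    (hc' : Integrable (fun a => ∫ b, c a b ∂ν) μ) (hfc : ∀ a b, |f a - f b| ≤ c a b) :
    |∫ a, f a ∂μ - ∫ b, f b ∂ν| ≤ ∫ a, ∫ b, c a b ∂ν ∂μ := by
  have hsplit : ∫ a, f a ∂μ - ∫ b, f b ∂ν = ∫ a, ∫ b, (f a - f b) ∂ν ∂μ := by
    have hinner : ∀ a, ∫ b, (f a - f b) ∂ν = f a - ∫ b, f b ∂ν := fun a => by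
      rw [integral_sub (integrable_const _) hfν, integral_const, probReal_univ, one_smul]
    simp_rw [hinner]
    rw [integral_sub hfμ (integrable_const _), integral_const, probReal_univ, one_smul]
  rw [hsplit, ← Real.norm_eq_abs]
  refine norm_integral_le_of_norm_le hc' (ae_of_all _ fun a => ?_)
  exact norm_integral_le_of_norm_le (hc a) (ae_of_all _ fun b => hfc a b)

lemma integrable_integral_ite_one_zero {Y : Type*} [MeasurableSpace Y] (μ : Measure X)
    (ν : Measure Y) [IsFiniteMeasure μ] [IsFiniteMeasure ν] {P : X → Y → Prop}
    [∀ x, DecidablePred (P x)] (hP : MeasurableSet {q : X × Y | P q.1 q.2}) :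
    Integrable (fun x => ∫ y, if P x y then (1 : ℝ) else 0 ∂ν) μ :=
  (integrable_ite_one_zero (μ.prod ν) hP).integral_prod_left

end

lemma abs_ite_ne_sub_ite_ne_le {β : Type*} [DecidableEq β] (a b c : β) :
    |(if a ≠ c then (1 : ℝ) else 0) - if b ≠ c then 1 else 0| ≤ if a ≠ b then 1 else 0 := by
  by_cases hab : a = b
  · simp [hab]
  · by_cases hac : a = c <;> by_cases hbc : b = c <;> simp_all

theorem abs_gibbs_risk_sub_le_disagreement_general
    {α Θ : Type*} [MeasurableSpace α] [MeasurableSpace Θ]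
    {k : ℕ}
    (D : Measure (α × Fin k)) [IsProbabilityMeasure D]
    (Q Q' : Measure Θ) [IsProbabilityMeasure Q] [IsProbabilityMeasure Q']
    (g : Θ × α → Fin k) (hg : Measurable g) :
    |(∫ p, ∫ θ, (if g (θ, p.1) ≠ p.2 then (1 : ℝ) else 0) ∂Q ∂D) -
        ∫ p, ∫ θ', (if g (θ', p.1) ≠ p.2 then (1 : ℝ) else 0) ∂Q' ∂D| ≤
      ∫ p, ∫ θ, ∫ θ',
        (if g (θ, p.1) ≠ g (θ', p.1) then (1 : ℝ) else 0) ∂Q' ∂Q ∂D := by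
  have hrisk : ∀ (μ : Measure Θ) [IsFiniteMeasure μ], Integrable
      (fun p : α × Fin k => ∫ θ, (if g (θ, p.1) ≠ p.2 then (1 : ℝ) else 0) ∂μ) D :=
    fun μ _ => integrable_integral_ite_one_zero D μ (by measurability)
  have hdis : Integrable (fun p : α × Fin k => ∫ θ, ∫ θ',
      (if g (θ, p.1) ≠ g (θ', p.1) then (1 : ℝ) else 0) ∂Q' ∂Q) D :=
    (integrable_integral_ite_one_zero (D.prod Q) Q'
      (P := fun q θ' => g (q.2, q.1.1) ≠ g (θ', q.1.1)) (by measurability)).integral_prod_left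
  rw [← integral_sub (hrisk Q) (hrisk Q'), ← Real.norm_eq_abs]
  refine norm_integral_le_of_norm_le hdis (ae_of_all _ fun p => ?_)
  exact abs_integral_sub_integral_le
    (integrable_ite_one_zero Q (by measurability)) (integrable_ite_one_zero Q' (by measurability))
    (fun θ => integrable_ite_one_zero Q' (by measurability))
    (integrable_integral_ite_one_zero Q Q' (by measurability))
    (fun θ θ' => abs_ite_ne_sub_ite_ne_le _ _ _)

/-- Lemma 3: the difference of the Gibbs risks of two posteriors is bounded by
their expected decision-boundary disagreement:
`|R_D(Q) − R_D(Q')| ≤ Dis_D(Q,Q')`. -/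
theorem abs_gibbs_risk_sub_le_disagreement
    {α Θ : Type*} [MeasurableSpace α] [MeasurableSpace Θ]
    {k : ℕ} (hk : 2 ≤ k)
    (D : Measure (α × Fin k)) [IsProbabilityMeasure D]
    (Q Q' : Measure Θ) [IsProbabilityMeasure Q] [IsProbabilityMeasure Q']
    (g : Θ × α → Fin k) (hg : Measurable g) :
    |(∫ p, ∫ θ, (if g (θ, p.1) ≠ p.2 then (1 : ℝ) else 0) ∂Q ∂D) -
        ∫ p, ∫ θ', (if g (θ', p.1) ≠ p.2 then (1 : ℝ) else 0) ∂Q' ∂D| ≤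
      ∫ p, ∫ θ, ∫ θ',
        (if g (θ, p.1) ≠ g (θ', p.1) then (1 : ℝ) else 0) ∂Q' ∂Q ∂D :=
  abs_gibbs_risk_sub_le_disagreement_general D Q Q' g hg
end
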